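/- Let Γ ⊆ ℕ × ℤⁿ be a semigroup that generates ℤ^{n+1} as a group, whose Okounkov body Δ has nonempty interior, and such that Γ_l ⊆ l·Δ for all l. For any compact set 𝒦 ⊆ int(Δ) there exists l₀ such that for all l ≥ l₀, every lattice point p ∈ 𝒦 ∩ (1/l)ℤⁿ satisfies l·p ∈ Γ_l. -/

import Mathlib

open Finset Metric Set

namespace OkAux

variable {ι κ : Type*} [Fintype ι] [Fintype κ]


variable {ι κ : Type*} [Fintype ι] [Fintype κ]

lemma ratCast_linearIndependent (v : ι → (κ → ℚ))
    (hv : LinearIndependent ℚ v) :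
    LinearIndependent ℝ (fun i => (fun k => ((v i k : ℝ)))) := by
  classical
  rw [Fintype.linearIndependent_iff]
  intro c hc i₀
  have hnm : v i₀ ∉ Submodule.span ℚ (v '' (Set.univ \ {i₀})) :=
    hv.notMem_span_image (by simp)
  obtain ⟨φ, hφ0, hφmap⟩ := Submodule.exists_dual_map_eq_bot_of_notMem hnm inferInstance
  have hφvanish : ∀ i, i ≠ i₀ → φ (v i) = 0 := by
    intro i hi
    have hmem : v i ∈ Submodule.span ℚ (v '' (Set.univ \ {i₀})) :=
      Submodule.subset_span ⟨i, by simp [hi], rfl⟩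
    have : φ (v i) ∈ (Submodule.span ℚ (v '' (Set.univ \ {i₀}))).map φ :=
      Submodule.mem_map_of_mem hmem
    rw [hφmap] at this
    exact (Submodule.mem_bot ℚ).mp this
  set r : κ → ℚ := fun k => φ (fun j => if k = j then 1 else 0) with hr
  have key : ∀ i, ((φ (v i) : ℚ) : ℝ) = ∑ k, (r k : ℝ) * (v i k : ℝ) := by
    intro i
    rw [LinearMap.pi_apply_eq_sum_univ φ (v i), Rat.cast_sum]
    exact Finset.sum_congr rfl fun k _ => by
      rw [smul_eq_mul, Rat.cast_mul, mul_comm]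
  have h0 : ∀ k, ∑ i, c i * (v i k : ℝ) = 0 := by
    intro k
    have := congrFun hc k
    simpa [Finset.sum_apply] using this
  have hmain : c i₀ * ((φ (v i₀) : ℚ) : ℝ) = 0 := by
    have : ∀ i, c i * ((φ (v i) : ℚ) : ℝ) = ∑ k, (r k : ℝ) * (c i * (v i k : ℝ)) := by
      intro i; rw [key i, Finset.mul_sum]; exact Finset.sum_congr rfl fun k _ => by ring
    calc c i₀ * ((φ (v i₀) : ℚ) : ℝ)
        = ∑ i, c i * ((φ (v i) : ℚ) : ℝ) := by
          refine Eq.symm (Finset.sum_eq_single (f := fun i => c i * ((φ (v i) : ℚ) : ℝ)) i₀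
            (fun i _ hi => ?_) (fun h => absurd (Finset.mem_univ i₀) h))
          simp only [hφvanish i hi, Rat.cast_zero, mul_zero]
      _ = ∑ i, ∑ k, (r k : ℝ) * (c i * (v i k : ℝ)) := Finset.sum_congr rfl fun i _ => this i
      _ = ∑ k, (r k : ℝ) * ∑ i, c i * (v i k : ℝ) := by
          rw [Finset.sum_comm]
          exact Finset.sum_congr rfl fun k _ => by rw [Finset.mul_sum]
      _ = 0 := by simp [h0]
  have : ((φ (v i₀) : ℚ) : ℝ) ≠ 0 := by exact_mod_cast hφ0
  exact (mul_eq_zero.mp hmain).resolve_right this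






lemma rat_kernel_span (b : ι → κ → ℚ) :
    ∃ (N : ℕ) (g : Fin N → ι → ℚ),
      (∀ j p, ∑ i, g j i * b i p = 0) ∧
      ∀ r : ι → ℝ, (∀ p, ∑ i, r i * (b i p : ℝ) = 0) →
        ∃ α : Fin N → ℝ, ∀ i, r i = ∑ j, α j * (g j i : ℝ) := by
  classical
  let f : (ι → ℚ) →ₗ[ℚ] (κ → ℚ) :=
    { toFun := fun x p => ∑ i, x i * b i p
      map_add' := by
        intro x y; funext p
        simp [add_mul, Finset.sum_add_distrib]
      map_smul' := by
        intro c x; funext p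
        simp [Finset.mul_sum, mul_assoc]
      }
  have hfapp : ∀ x p, f x p = ∑ i, x i * b i p := fun _ _ => rfl
  obtain ⟨C, hC⟩ := Submodule.exists_isCompl (LinearMap.ker f)
  let gK := Module.finBasis ℚ (LinearMap.ker f)
  let gC := Module.finBasis ℚ C
  set dK := Module.finrank ℚ (LinearMap.ker f)
  set dC := Module.finrank ℚ C
  let g : Fin dK → ι → ℚ := fun j => (gK j : ι → ℚ)
  let cc : Fin dC → ι → ℚ := fun t => (gC t : ι → ℚ)
  have hgker : ∀ j, f (g j) = 0 := fun j => (gK j).2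
  have hccC : ∀ t, (cc t) ∈ C := fun t => (gC t).2
  -- the images f (cc t) are ℚ-linearly independent
  have hindep : LinearIndependent ℚ (fun t => f (cc t)) := by
    rw [Fintype.linearIndependent_iff]
    intro lam hlam
    have h1 : f (∑ t, lam t • cc t) = 0 := by
      rw [map_sum]
      simpa only [map_smul] using hlam
    have h2 : (∑ t, lam t • cc t) ∈ C := Submodule.sum_mem C fun t _ =>
      Submodule.smul_mem C _ (hccC t)
    have h3 : (∑ t, lam t • cc t) = 0 := by
      have := hC.disjoint
      rw [Submodule.disjoint_def] at this
      exact this _ (LinearMap.mem_ker.mpr h1) h2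
    have h4 : (∑ t, lam t • gC t) = 0 := by
      apply Subtype.ext
      push_cast [Submodule.coe_sum]
      simpa [cc] using h3
    exact Fintype.linearIndependent_iff.mp gC.linearIndependent lam h4
  have RI := ratCast_linearIndependent _ hindep
  -- the combined family spans over ℚ
  have hQtop : Submodule.span ℚ (Set.range (Sum.elim g cc)) = ⊤ := by
    rw [Set.Sum.elim_range, Submodule.span_union]
    have e1 : Submodule.span ℚ (Set.range g) = LinearMap.ker f := by
      have : Set.range g = Set.range ((LinearMap.ker f).subtype ∘ gK) := rfl
      rw [this, Set.range_comp, Submodule.span_image, gK.span_eq, Submodule.map_subtype_top]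
    have e2 : Submodule.span ℚ (Set.range cc) = C := by
      have : Set.range cc = Set.range (C.subtype ∘ gC) := rfl
      rw [this, Set.range_comp, Submodule.span_image, gC.span_eq, Submodule.map_subtype_top]
    rw [e1, e2, hC.sup_eq_top]
  -- hence the casts span over ℝ
  have hRtop : ∀ x : ι → ℝ,
      x ∈ Submodule.span ℝ (Set.range fun s => fun i => ((Sum.elim g cc s i : ℚ) : ℝ)) := by
    intro x
    have htop : Submodule.span ℝ (Set.range fun s => fun i => ((Sum.elim g cc s i : ℚ) : ℝ)) = ⊤ := by
      rw [eq_top_iff, ← (Pi.basisFun ℝ ι).span_eq, Submodule.span_le]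
      rintro _ ⟨k, rfl⟩
      have hk : (Pi.single k 1 : ι → ℚ) ∈ Submodule.span ℚ (Set.range (Sum.elim g cc)) := by
        rw [hQtop]; trivial
      obtain ⟨d, hd⟩ := (Submodule.mem_span_range_iff_exists_fun ℚ).mp hk
      have : (fun i => ((Pi.single k 1 : ι → ℚ) i : ℝ))
          ∈ Submodule.span ℝ (Set.range fun s => fun i => ((Sum.elim g cc s i : ℚ) : ℝ)) := by
        rw [← hd]
        apply (Submodule.mem_span_range_iff_exists_fun ℝ).mpr
        refine ⟨fun s => (d s : ℝ), ?_⟩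
        funext i
        rw [Finset.sum_apply, Finset.sum_apply]
        push_cast
        exact Finset.sum_congr rfl fun s _ => by simp
      rw [SetLike.mem_coe]
      convert this using 1
      rw [Pi.basisFun_apply]
      funext i
      by_cases h : i = k <;> simp [Pi.single_apply, h]
    rw [htop]; trivial
  refine ⟨dK, g, ?_, ?_⟩
  · intro j p
    have := congrFun (hgker j) p
    rw [hfapp] at this
    simpa using this
  · intro r hr
    obtain ⟨d, hd⟩ := (Submodule.mem_span_range_iff_exists_fun ℝ).mp (hRtop r)
    have hdi : ∀ i, r i = ∑ s, d s * ((Sum.elim g cc s i : ℚ) : ℝ) := by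
      intro i
      rw [← hd, Finset.sum_apply]
      exact Finset.sum_congr rfl fun s _ => rfl
    -- show the C-part coefficients vanish
    have hkey : ∀ p, ∑ t, d (Sum.inr t) * ((f (cc t) p : ℚ) : ℝ) = 0 := by
      intro p
      have hTg : ∀ j, ∑ i, ((g j i : ℝ)) * (b i p : ℝ) = 0 := by
        intro j
        have h := congrFun (hgker j) p
        rw [hfapp] at h
        have h' : ((∑ i, g j i * b i p : ℚ) : ℝ) = 0 := by rw [h]; simp
        push_cast at h'
        exact h'
      have hTc : ∀ t, ∑ i, ((cc t i : ℝ)) * (b i p : ℝ) = ((f (cc t) p : ℚ) : ℝ) := by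
        intro t
        rw [hfapp]
        push_cast
        rfl
      have h1 : ∑ i, r i * (b i p : ℝ) = 0 := hr p
      have h2 : ∑ i, r i * (b i p : ℝ)
          = ∑ s, d s * ∑ i, ((Sum.elim g cc s i : ℚ) : ℝ) * (b i p : ℝ) := by
        calc ∑ i, r i * (b i p : ℝ)
            = ∑ i, ∑ s, d s * ((Sum.elim g cc s i : ℚ) : ℝ) * (b i p : ℝ) := by
              refine Finset.sum_congr rfl fun i _ => ?_
              rw [hdi i, Finset.sum_mul]
          _ = ∑ s, ∑ i, d s * ((Sum.elim g cc s i : ℚ) : ℝ) * (b i p : ℝ) := Finset.sum_comm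
          _ = ∑ s, d s * ∑ i, ((Sum.elim g cc s i : ℚ) : ℝ) * (b i p : ℝ) := by
              refine Finset.sum_congr rfl fun s _ => ?_
              rw [Finset.mul_sum]
              exact Finset.sum_congr rfl fun i _ => by ring
      rw [h1] at h2
      rw [Fintype.sum_sum_type] at h2
      simp only [Sum.elim_inl, Sum.elim_inr] at h2
      have e1 : ∑ j, d (Sum.inl j) * ∑ i, ((g j i : ℝ)) * (b i p : ℝ) = 0 := by
        refine Finset.sum_eq_zero fun j _ => ?_
        rw [hTg j, mul_zero]
      rw [e1, zero_add] at h2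
      calc ∑ t, d (Sum.inr t) * ((f (cc t) p : ℚ) : ℝ)
          = ∑ t, d (Sum.inr t) * ∑ i, ((cc t i : ℝ)) * (b i p : ℝ) :=
            Finset.sum_congr rfl fun t _ => by rw [hTc t]
        _ = 0 := h2.symm
    have hβ : ∀ t, d (Sum.inr t) = 0 := by
      intro t
      refine Fintype.linearIndependent_iff.mp RI (fun t => d (Sum.inr t)) ?_ t
      funext k
      have := hkey k
      simpa [Finset.sum_apply] using this
    refine ⟨fun j => d (Sum.inl j), fun i => ?_⟩
    rw [hdi i, Fintype.sum_sum_type]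
    simp only [Sum.elim_inl, Sum.elim_inr]
    have : ∑ t, d (Sum.inr t) * ((cc t i : ℚ) : ℝ) = 0 :=
      Finset.sum_eq_zero fun t _ => by rw [hβ t, zero_mul]
    rw [this, add_zero]





lemma exists_int_mul_den_dvd (q : ℚ) (d : ℕ) (h : q.den ∣ d) :
    ∃ z : ℤ, (z : ℚ) = (d : ℚ) * q := by
  obtain ⟨e, he⟩ := h
  refine ⟨(e : ℤ) * q.num, ?_⟩
  have hden : ((q.den : ℚ)) ≠ 0 := by
    exact_mod_cast q.den_nz
  have hq : (q.den : ℚ) * q = (q.num : ℚ) := by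
    rw [mul_comm]
    nth_rewrite 1 [← Rat.num_div_den q]
    exact div_mul_cancel₀ _ hden
  subst he
  push_cast
  rw [← hq]; ring

lemma int_kernel_span (b : ι → κ → ℤ) :
    ∃ (N : ℕ) (g : Fin N → ι → ℤ),
      (∀ j p, ∑ i, g j i * b i p = 0) ∧
      ∀ r : ι → ℝ, (∀ p, ∑ i, r i * (b i p : ℝ) = 0) →
        ∃ α : Fin N → ℝ, ∀ i, r i = ∑ j, α j * (g j i : ℝ) := by
  classical
  obtain ⟨N, g, hg, hspan⟩ := rat_kernel_span (fun i p => ((b i p : ℚ)))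
  have hDpos : ∀ j : Fin N, 0 < ∏ i, (g j i).den := fun j =>
    Finset.prod_pos fun i _ => (g j i).pos
  set D : Fin N → ℕ := fun j => ∏ i, (g j i).den with hD
  have hdvd : ∀ j i, (g j i).den ∣ D j := fun j i => Finset.dvd_prod_of_mem _ (mem_univ i)
  have hex : ∀ j i, ∃ z : ℤ, (z : ℚ) = (D j : ℚ) * g j i := fun j i =>
    exists_int_mul_den_dvd _ _ (hdvd j i)
  set gz : Fin N → ι → ℤ := fun j i => (hex j i).choose with hgz
  have hgzval : ∀ j i, ((gz j i : ℚ)) = (D j : ℚ) * g j i := fun j i => (hex j i).choose_spec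
  have hgzR : ∀ j i, ((gz j i : ℝ)) = (D j : ℝ) * ((g j i : ℝ)) := by
    intro j i
    have := hgzval j i
    have h2 : ((gz j i : ℚ) : ℝ) = (((D j : ℚ) * g j i : ℚ) : ℝ) := by rw [this]
    push_cast at h2
    push_cast
    exact h2
  refine ⟨N, gz, ?_, ?_⟩
  · intro j p
    have : ((∑ i, gz j i * b i p : ℤ) : ℚ) = 0 := by
      push_cast
      have : ∑ i, ((gz j i : ℚ)) * ((b i p : ℚ)) = (D j : ℚ) * ∑ i, g j i * ((b i p : ℚ)) := by
        rw [Finset.mul_sum]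
        exact Finset.sum_congr rfl fun i _ => by rw [hgzval j i]; ring
      rw [this, hg j p, mul_zero]
    exact_mod_cast this
  · intro r hr
    obtain ⟨α, hα⟩ := hspan r (by
      intro p
      exact_mod_cast hr p)
    refine ⟨fun j => α j / (D j : ℝ), fun i => ?_⟩
    rw [hα i]
    refine Finset.sum_congr rfl fun j _ => ?_
    rw [hgzR j i]
    have hDne : (D j : ℝ) ≠ 0 := by
      exact_mod_cast (hDpos j).ne'
    field_simp

lemma khovanskii_bound (b : ι → κ → ℤ) :
    ∃ Dn : ℕ, ∀ (m : ι → ℤ) (q : ι → ℝ), (∀ i, 0 ≤ q i) →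
      (∀ p, ∑ i, (m i : ℝ) * (b i p : ℝ) = ∑ i, q i * (b i p : ℝ)) →
      ∃ c : ι → ℕ, ∀ p, ∑ i, (c i : ℤ) * b i p = ∑ i, m i * b i p + (Dn : ℤ) * ∑ i, b i p := by
  classical
  obtain ⟨N, g, hg, hspan⟩ := int_kernel_span b
  set B : Fin N → ℕ := fun j => Finset.univ.sup fun i => (g j i).natAbs with hB
  refine ⟨∑ j, B j, ?_⟩
  intro m q hq heq
  set Dn := ∑ j, B j with hDn
  set r : ι → ℝ := fun i => (m i : ℝ) - q i with hr
  have hker : ∀ p, ∑ i, r i * (b i p : ℝ) = 0 := by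
    intro p
    have : ∑ i, r i * (b i p : ℝ)
        = ∑ i, (m i : ℝ) * (b i p : ℝ) - ∑ i, q i * (b i p : ℝ) := by
      rw [← Finset.sum_sub_distrib]
      exact Finset.sum_congr rfl fun i _ => by rw [hr]; ring
    rw [this, heq p, sub_self]
  obtain ⟨α, hα⟩ := hspan r hker
  set z : ι → ℤ := fun i => ∑ j, ⌊α j⌋ * g j i with hz
  have hzb : ∀ p, ∑ i, z i * b i p = 0 := by
    intro p
    calc ∑ i, (∑ j, ⌊α j⌋ * g j i) * b i p
        = ∑ i, ∑ j, ⌊α j⌋ * g j i * b i p := by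
          exact Finset.sum_congr rfl fun i _ => by rw [Finset.sum_mul]
      _ = ∑ j, ∑ i, ⌊α j⌋ * g j i * b i p := Finset.sum_comm
      _ = ∑ j, ⌊α j⌋ * ∑ i, g j i * b i p := by
          refine Finset.sum_congr rfl fun j _ => ?_
          rw [Finset.mul_sum]
          exact Finset.sum_congr rfl fun i _ => by ring
      _ = 0 := by
          refine Finset.sum_eq_zero fun j _ => ?_
          rw [hg j p, mul_zero]
  have habs : ∀ i, |r i - (z i : ℝ)| ≤ (Dn : ℝ) := by
    intro i
    have h1 : r i - (z i : ℝ) = ∑ j, (α j - (⌊α j⌋ : ℝ)) * (g j i : ℝ) := by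
      rw [hα i]
      push_cast [hz]
      rw [← Finset.sum_sub_distrib]
      exact Finset.sum_congr rfl fun j _ => by ring
    rw [h1]
    calc |∑ j, (α j - (⌊α j⌋ : ℝ)) * (g j i : ℝ)|
        ≤ ∑ j, |(α j - (⌊α j⌋ : ℝ)) * (g j i : ℝ)| := Finset.abs_sum_le_sum_abs _ _
      _ ≤ ∑ j, (B j : ℝ) := by
          refine Finset.sum_le_sum fun j _ => ?_
          rw [abs_mul]
          have h2 : |α j - (⌊α j⌋ : ℝ)| ≤ 1 := by
            rw [abs_of_nonneg (by linarith [Int.floor_le (α j)])]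
            linarith [Int.lt_floor_add_one (α j)]
          have h3 : |(g j i : ℝ)| ≤ (B j : ℝ) := by
            rw [← Int.cast_abs]
            have : |g j i| ≤ (B j : ℤ) := by
              rw [Int.abs_eq_natAbs]
              exact_mod_cast Finset.le_sup (f := fun i => (g j i).natAbs) (mem_univ i)
            exact_mod_cast this
          calc |α j - (⌊α j⌋ : ℝ)| * |(g j i : ℝ)| ≤ 1 * (B j : ℝ) := by
                exact mul_le_mul h2 h3 (abs_nonneg _) zero_le_one
            _ = (B j : ℝ) := one_mul _
      _ = (Dn : ℝ) := by rw [hDn]; push_cast; rfl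
  have hnn : ∀ i, 0 ≤ m i - z i + (Dn : ℤ) := by
    intro i
    have hreal : (0 : ℝ) ≤ (m i : ℝ) - (z i : ℝ) + (Dn : ℝ) := by
      have h1 : (m i : ℝ) - (z i : ℝ) = q i + (r i - (z i : ℝ)) := by rw [hr]; ring
      have h2 : -(Dn : ℝ) ≤ r i - (z i : ℝ) := by
        have := habs i
        rw [abs_le] at this
        exact this.1
      have := hq i
      linarith
    exact_mod_cast hreal
  refine ⟨fun i => (m i - z i + (Dn : ℤ)).toNat, ?_⟩
  intro p
  have hcast : ∀ i, (((m i - z i + (Dn : ℤ)).toNat : ℤ)) = m i - z i + (Dn : ℤ) := fun i =>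
    Int.toNat_of_nonneg (hnn i)
  calc ∑ i, (((m i - z i + (Dn : ℤ)).toNat : ℤ)) * b i p
      = ∑ i, (m i - z i + (Dn : ℤ)) * b i p := by
        exact Finset.sum_congr rfl fun i _ => by rw [hcast i]
    _ = (∑ i, m i * b i p) - (∑ i, z i * b i p) + (Dn : ℤ) * ∑ i, b i p := by
        rw [Finset.mul_sum, ← Finset.sum_sub_distrib, ← Finset.sum_add_distrib]
        exact Finset.sum_congr rfl fun i _ => by ring
    _ = ∑ i, m i * b i p + (Dn : ℤ) * ∑ i, b i p := by rw [hzb p]; ring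



lemma nsmul_mem_semigroup {α : Type*} [AddCommMonoid α] (Γ : Set α)
    (hadd : ∀ γ ∈ Γ, ∀ γ' ∈ Γ, γ + γ' ∈ Γ) :
    ∀ (k : ℕ), k ≠ 0 → ∀ γ ∈ Γ, k • γ ∈ Γ := by
  intro k
  induction k with
  | zero => intro h; exact absurd rfl h
  | succ k ih =>
    intro _ γ hγ
    rcases Nat.eq_zero_or_pos k with hk | hk
    · subst hk; simpa using hγ
    · rw [succ_nsmul]
      exact hadd _ (ih hk.ne' γ hγ) _ hγ

lemma sum_nsmul_mem_semigroup {α : Type*} [AddCommMonoid α] (Γ : Set α)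
    (hadd : ∀ γ ∈ Γ, ∀ γ' ∈ Γ, γ + γ' ∈ Γ) {ι : Type*} [Fintype ι]
    (b : ι → α) (hb : ∀ i, b i ∈ Γ) (c : ι → ℕ) (hc : ∃ i, c i ≠ 0) :
    ∑ i, c i • b i ∈ Γ := by
  classical
  have H : ∀ s : Finset ι, (∃ i ∈ s, c i ≠ 0) → ∑ i ∈ s, c i • b i ∈ Γ := by
    intro s
    induction s using Finset.induction_on with
    | empty => rintro ⟨i, hi, -⟩; exact absurd hi (Finset.notMem_empty i)
    | insert a s ha ih =>
      rintro ⟨i, hi, hne⟩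
      by_cases hca : c a = 0
      · rw [Finset.sum_insert ha, hca, zero_smul, zero_add]
        apply ih
        rcases Finset.mem_insert.mp hi with rfl | his
        · exact absurd hca hne
        · exact ⟨i, his, hne⟩
      · rw [Finset.sum_insert ha]
        by_cases hs : ∃ j ∈ s, c j ≠ 0
        · exact hadd _ (nsmul_mem_semigroup Γ hadd (c a) hca _ (hb a)) _ (ih hs)
        · have hzero : ∑ j ∈ s, c j • b j = 0 := by
            refine Finset.sum_eq_zero fun j hj => ?_
            push_neg at hs
            rw [hs j hj, zero_smul]
          rw [hzero, add_zero]
          exact nsmul_mem_semigroup Γ hadd (c a) hca _ (hb a)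
  obtain ⟨i, hi⟩ := hc
  exact H Finset.univ ⟨i, Finset.mem_univ i, hi⟩

lemma exists_finset_span_top {M : Type*} [AddCommGroup M] [Module.Finite ℤ M]
    (S : Set M) (hS : AddSubgroup.closure S = ⊤) :
    ∃ T : Finset M, ↑T ⊆ S ∧ Submodule.span ℤ (T : Set M) = ⊤ := by
  classical
  have hspan : Submodule.span ℤ S = ⊤ := by
    rw [Submodule.eq_top_iff']
    intro x
    have hx : x ∈ AddSubgroup.closure S := by rw [hS]; trivial
    rw [← Submodule.span_int_eq_addSubgroupClosure] at hx
    exact (Submodule.mem_toAddSubgroup _).mp hx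
  obtain ⟨G, hG⟩ := Module.Finite.fg_top (R := ℤ) (M := M)
  have hmem : ∀ g : M, ∃ T : Finset M, ↑T ⊆ S ∧ g ∈ Submodule.span ℤ (T : Set M) := fun g =>
    Submodule.mem_span_finite_of_mem_span (by rw [hspan]; trivial)
  choose Tf hTf1 hTf2 using hmem
  refine ⟨G.biUnion Tf, ?_, ?_⟩
  · intro x hx
    obtain ⟨g, _, hg⟩ := Finset.mem_biUnion.mp hx
    exact hTf1 g hg
  · rw [eq_top_iff, ← hG, Submodule.span_le]
    intro g hg
    have : g ∈ Submodule.span ℤ ((G.biUnion Tf : Finset M) : Set M) :=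
      Submodule.span_mono (by
        intro x hx
        exact Finset.mem_coe.mpr (Finset.mem_biUnion.mpr ⟨g, hg, Finset.mem_coe.mp hx⟩))
        (hTf2 g)
    exact this

lemma compact_subset_hull_finite {n : ℕ} (A : Set (Fin n → ℝ)) (𝒦 : Set (Fin n → ℝ))
    (h𝒦c : IsCompact 𝒦)
    (hne : (interior (closure (convexHull ℝ A))).Nonempty)
    (h𝒦 : 𝒦 ⊆ interior (closure (convexHull ℝ A))) :
    ∃ P : Finset (Fin n → ℝ), ↑P ⊆ A ∧ ∃ δ : ℝ, 0 < δ ∧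
      ∀ y ∈ 𝒦, ∀ z : Fin n → ℝ, dist z y < δ → z ∈ convexHull ℝ (P : Set (Fin n → ℝ)) := by
  classical
  set s := convexHull ℝ A with hs
  have hsconv : Convex ℝ s := convex_convexHull ℝ A
  -- interior of closure is contained in interior
  have hint : interior (closure s) ⊆ interior s := by
    have htop : affineSpan ℝ (closure s) = ⊤ :=
      ((hsconv.closure).interior_nonempty_iff_affineSpan_eq_top).mp hne
    have hle : affineSpan ℝ (closure s) ≤ affineSpan ℝ s :=
      affineSpan_le.mpr (closure_minimal (subset_affineSpan ℝ s)
        (affineSpan ℝ s).closed_of_finiteDimensional)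
    have h2 : affineSpan ℝ s = ⊤ := eq_top_iff.mpr (htop ▸ hle)
    obtain ⟨y, hy⟩ := hsconv.interior_nonempty_iff_affineSpan_eq_top.mpr h2
    intro x hx
    have hopen : IsOpen (interior (closure s)) := isOpen_interior
    have hcont : Continuous (fun u : ℝ => y + u • (x - y)) := by continuity
    have hpre : (fun u : ℝ => y + u • (x - y)) ⁻¹' interior (closure s) ∈ nhds (1 : ℝ) := by
      apply hcont.continuousAt.preimage_mem_nhds
      apply hopen.mem_nhds
      simpa using hx
    obtain ⟨ε, hε, hball⟩ := Metric.mem_nhds_iff.mp hpre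
    set u : ℝ := 1 + ε / 2 with hu
    have hu1 : 1 < u := by simp [hu]; linarith
    have huball : u ∈ Metric.ball (1 : ℝ) ε := by
      rw [Metric.mem_ball, Real.dist_eq, hu]
      rw [abs_of_nonneg (by linarith)]
      linarith
    have hz : y + u • (x - y) ∈ interior (closure s) := hball huball
    set z := y + u • (x - y) with hzdef
    have hu0 : u ≠ 0 := by linarith
    have hcombo : (1 - 1/u) • y + (1/u) • z = x := by
      rw [hzdef]
      match_scalars <;> field_simp <;> ring
    have := hsconv.combo_interior_closure_mem_interior hy (interior_subset hz)
      (a := 1 - 1/u) (b := 1/u)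
      (by
        have : 1/u < 1 := by
          rw [div_lt_one (by linarith)]; exact hu1
        linarith)
      (by positivity)
      (by ring)
    rwa [hcombo] at this
  -- each point of 𝒦 has a finite subset of A whose hull is a neighborhood
  have hloc : ∀ x ∈ 𝒦, ∃ P : Finset (Fin n → ℝ), ↑P ⊆ A ∧
      x ∈ interior (convexHull ℝ (P : Set (Fin n → ℝ))) := by
    intro x hx
    have hxint : x ∈ interior s := hint (h𝒦 hx)
    have hnhds : s ∈ nhds x := mem_interior_iff_mem_nhds.mp hxint
    obtain ⟨b, hbint, hbsub⟩ := exists_mem_interior_convexHull_affineBasis hnhds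
    -- each vertex lies in the convex hull of a finite subset of A
    have hvert : ∀ i, ∃ P : Finset (Fin n → ℝ), ↑P ⊆ A ∧
        b i ∈ convexHull ℝ (P : Set (Fin n → ℝ)) := by
      intro i
      have : b i ∈ convexHull ℝ A := hbsub (subset_convexHull ℝ _ (Set.mem_range_self i))
      rw [convexHull_eq_union_convexHull_finite_subsets] at this
      simp only [Set.mem_iUnion] at this
      obtain ⟨t, ht, hmem⟩ := this
      exact ⟨t, ht, hmem⟩
    choose Pv hPv1 hPv2 using hvert
    refine ⟨Finset.univ.biUnion Pv, ?_, ?_⟩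
    · intro p hp
      obtain ⟨i, _, hip⟩ := Finset.mem_biUnion.mp hp
      exact hPv1 i hip
    · have hsub2 : convexHull ℝ (Set.range b) ⊆
          convexHull ℝ ((Finset.univ.biUnion Pv : Finset (Fin n → ℝ)) : Set (Fin n → ℝ)) := by
        apply convexHull_min
        · rintro _ ⟨i, rfl⟩
          refine convexHull_mono ?_ (hPv2 i)
          intro p hp
          exact Finset.mem_coe.mpr (Finset.mem_biUnion.mpr ⟨i, Finset.mem_univ i, Finset.mem_coe.mp hp⟩)
        · exact convex_convexHull ℝ _
      exact interior_mono hsub2 hbint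
  -- compactness: finitely many suffice
  choose Px hPx1 hPx2 using hloc
  have hcover : 𝒦 ⊆ ⋃ (x : 𝒦), interior (convexHull ℝ ((Px x.1 x.2 : Finset (Fin n → ℝ)) : Set (Fin n → ℝ))) := by
    intro x hx
    exact Set.mem_iUnion.mpr ⟨⟨x, hx⟩, hPx2 x hx⟩
  obtain ⟨t, ht⟩ := h𝒦c.elim_finite_subcover _ (fun x => isOpen_interior) hcover
  set P : Finset (Fin n → ℝ) := t.biUnion (fun x => Px x.1 x.2) with hP
  have hPA : ↑P ⊆ A := by
    intro p hp
    obtain ⟨x, _, hxp⟩ := Finset.mem_biUnion.mp hp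
    exact hPx1 x.1 x.2 hxp
  have h𝒦P : 𝒦 ⊆ interior (convexHull ℝ (P : Set (Fin n → ℝ))) := by
    intro x hx
    obtain ⟨x', hx't, hx'⟩ := Set.mem_iUnion₂.mp (ht hx)
    refine interior_mono (convexHull_mono ?_) hx'
    intro p hp
    exact Finset.mem_coe.mpr (Finset.mem_biUnion.mpr ⟨x', hx't, Finset.mem_coe.mp hp⟩)
  obtain ⟨δ, hδ, hthick⟩ := h𝒦c.exists_thickening_subset_open isOpen_interior h𝒦P
  refine ⟨P, hPA, δ, hδ, ?_⟩
  intro y hy z hdist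
  have : z ∈ thickening δ 𝒦 := mem_thickening_iff.mpr ⟨y, hy, hdist⟩
  exact interior_subset (hthick this)


end OkAux


open OkAux Finset in
/-- Integer-points property of Okounkov bodies of semigroups: if `Γ ⊆ ℕ × ℤⁿ`
is a semigroup generating `ℤ^{n+1}` as a group, whose Okounkov body `Δ` has
nonempty interior, with `Γ_l ⊆ lΔ` for all `l`, then for any compact
`𝒦 ⊆ int Δ` there is `l₀` such that for all `l ≥ l₀` every lattice point of
`l𝒦` lies in `Γ_l`. -/
theorem okounkov_integer_points
    {n : ℕ} (Γ : Set (ℕ × (Fin n → ℤ)))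
    (hadd : ∀ γ ∈ Γ, ∀ γ' ∈ Γ, γ + γ' ∈ Γ)
    (hgen : AddSubgroup.closure
      ((fun γ : ℕ × (Fin n → ℤ) => ((γ.1 : ℤ), γ.2)) '' Γ) = (⊤ : AddSubgroup (ℤ × (Fin n → ℤ))))
    (Δ : Set (Fin n → ℝ))
    (hΔ : Δ = closure (convexHull ℝ
      {x : Fin n → ℝ | ∃ γ ∈ Γ, 1 ≤ γ.1 ∧ x = fun i => (γ.2 i : ℝ) / (γ.1 : ℝ)}))
    (hΔint : (interior Δ).Nonempty)
    (hcontain : ∀ γ ∈ Γ, (fun i => ((γ.2 i : ℝ))) ∈ (fun x => (γ.1 : ℝ) • x) '' Δ)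
    (𝒦 : Set (Fin n → ℝ)) (h𝒦c : IsCompact 𝒦) (h𝒦int : 𝒦 ⊆ interior Δ) :
    ∃ l₀ : ℕ, ∀ l ≥ l₀, ∀ a : Fin n → ℤ,
      (fun i => ((a i : ℝ))) ∈ (fun x => (l : ℝ) • x) '' 𝒦 → (l, a) ∈ Γ := by
  classical
  set A : Set (Fin n → ℝ) :=
    {x : Fin n → ℝ | ∃ γ ∈ Γ, 1 ≤ γ.1 ∧ x = fun i => (γ.2 i : ℝ) / (γ.1 : ℝ)} with hA
  rw [hΔ] at hΔint h𝒦int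
  obtain ⟨P, hPA, δ, hδ, hball⟩ := compact_subset_hull_finite A 𝒦 h𝒦c hΔint h𝒦int
  -- choose semigroup elements representing the vertices
  have hPch : ∀ p : {x // x ∈ P}, ∃ γ, γ ∈ Γ ∧ 1 ≤ γ.1 ∧
      (p : Fin n → ℝ) = fun i => (γ.2 i : ℝ) / (γ.1 : ℝ) := by
    intro p
    obtain ⟨γ, hγΓ, hγ1, hγeq⟩ := hPA p.2
    exact ⟨γ, hγΓ, hγ1, hγeq⟩
  choose γv hγvΓ hγv1 hγveq using hPch
  -- choose a finite generating set of the group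
  obtain ⟨T, hTS, hTspan⟩ := exists_finset_span_top _ hgen
  have hTch : ∀ x : {x // x ∈ T}, ∃ γ, γ ∈ Γ ∧
      ((γ.1 : ℤ), γ.2) = (x : ℤ × (Fin n → ℤ)) := by
    intro x
    obtain ⟨γ, hγΓ, hγeq⟩ := hTS x.2
    exact ⟨γ, hγΓ, hγeq⟩
  choose γt hγtΓ hγteq using hTch
  -- the combined family
  set ι := {x // x ∈ P} ⊕ {x // x ∈ T} with hι
  set bγ : ι → ℕ × (Fin n → ℤ) := Sum.elim γv γt with hbγ
  have hbΓ : ∀ i, bγ i ∈ Γ := by rintro (p | x); exacts [hγvΓ p, hγtΓ x]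
  set vb : ι → Fin (n + 1) → ℤ := fun i => Fin.cons ((bγ i).1 : ℤ) ((bγ i).2) with hvb
  obtain ⟨D, hD⟩ := khovanskii_bound vb
  -- totals
  set hh : ℕ := ∑ i, (bγ i).1 with hhh
  set ww : Fin n → ℤ := fun j => ∑ i, (bγ i).2 j with hww
  have hvb0 : ∀ i, vb i 0 = ((bγ i).1 : ℤ) := fun i => rfl
  have hvbs : ∀ i j, vb i (Fin.succ j) = (bγ i).2 j := fun i j => by
    simp [hvb, Fin.cons_succ]
  have hsum0 : ∑ i, vb i 0 = (hh : ℤ) := by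
    rw [hhh]; push_cast; rfl
  have hsums : ∀ j, ∑ i, vb i (Fin.succ j) = ww j := fun j => by
    rw [hww]
    exact Finset.sum_congr rfl fun i _ => hvbs i j
  -- bounds
  obtain ⟨R₀, hR₀⟩ := h𝒦c.isBounded.exists_norm_le
  set R : ℝ := max R₀ 0 with hR
  have hRnn : 0 ≤ R := le_max_right _ _
  have hyR : ∀ y ∈ 𝒦, ∀ j, |y j| ≤ R := by
    intro y hy j
    calc |y j| = ‖y j‖ := rfl
      _ ≤ ‖y‖ := norm_le_pi_norm y j
      _ ≤ R₀ := hR₀ y hy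
      _ ≤ R := le_max_left _ _
  set WR : ℝ := ∑ j, |(ww j : ℝ)| with hWR
  have hWRnn : 0 ≤ WR := Finset.sum_nonneg fun j _ => abs_nonneg _
  have hwj : ∀ j, |(ww j : ℝ)| ≤ WR := fun j =>
    Finset.single_le_sum (f := fun j => |(ww j : ℝ)|) (fun j _ => abs_nonneg _) (mem_univ j)
  set Cst : ℝ := D * (hh * R + WR) with hCst
  have hCstnn : 0 ≤ Cst := by positivity
  refine ⟨D * hh + 1 + ⌈Cst / δ⌉₊, ?_⟩
  intro l hl a hmem
  obtain ⟨y, hy𝒦, hyeq⟩ := hmem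
  have hya : ∀ j, (a j : ℝ) = l * y j := by
    intro j
    have := congrFun hyeq j
    simpa using this.symm
  have hl1 : 1 ≤ l := by omega
  have hlD : D * hh + 1 ≤ l := by omega
  set t : ℝ := (l : ℝ) - D * hh with ht
  have htpos : 0 < t := by
    rw [ht]
    have : ((D * hh + 1 : ℕ) : ℝ) ≤ (l : ℝ) := by exact_mod_cast hlD
    push_cast at this
    linarith
  have htδ : Cst < t * δ := by
    have h1 : Cst / δ ≤ (⌈Cst / δ⌉₊ : ℝ) := Nat.le_ceil _
    have h2 : (D * hh + 1 + ⌈Cst / δ⌉₊ : ℕ) ≤ l := hl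
    have h3 : ((D * hh + 1 + ⌈Cst / δ⌉₊ : ℕ) : ℝ) ≤ (l : ℝ) := by exact_mod_cast h2
    push_cast at h3
    have h4 : Cst / δ + 1 ≤ t := by rw [ht]; linarith
    have h5 : Cst / δ < t := by linarith
    calc Cst = (Cst / δ) * δ := by field_simp
      _ < t * δ := by exact mul_lt_mul_of_pos_right h5 hδ
  -- the rescaled point lies in the hull of P
  set z : Fin n → ℝ := fun j => ((a j : ℝ) - D * ww j) / t with hz
  have hzy : dist z y < δ := by
    rw [dist_pi_lt_iff hδ]
    intro j
    rw [Real.dist_eq]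
    have hzj : z j - y j = (D * hh * y j - D * ww j) / t := by
      rw [hz]
      field_simp
      rw [hya j]
      ring
    rw [hzj, abs_div, abs_of_pos htpos, div_lt_iff₀ htpos]
    calc |D * hh * y j - D * ww j| ≤ D * hh * |y j| + D * |(ww j : ℝ)| := by
          calc |D * hh * y j - D * ww j| ≤ |(D:ℝ) * hh * y j| + |(D:ℝ) * (ww j : ℝ)| := abs_sub _ _
            _ = D * hh * |y j| + D * |(ww j : ℝ)| := by
                rw [abs_mul, abs_mul, abs_mul]
                simp [abs_of_nonneg]
      _ ≤ D * hh * R + D * WR := by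
          have := hyR y hy𝒦 j
          have := hwj j
          have h01 : (0:ℝ) ≤ D * hh := by positivity
          have h02 : (0:ℝ) ≤ (D:ℝ) := by positivity
          nlinarith
      _ = Cst := by rw [hCst]; ring
      _ < t * δ := htδ
      _ = δ * t := by ring
  have hzP := hball y hy𝒦 z hzy
  rw [Finset.convexHull_eq] at hzP
  obtain ⟨w, hw0, hw1, hwz⟩ := hzP
  rw [Finset.centerMass_eq_of_sum_1 _ _ hw1] at hwz
  -- integer combination for the remainder
  set pair : ℤ × (Fin n → ℤ) := ((l : ℤ) - D * hh, fun j => a j - D * ww j) with hpair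
  have hTrange : (T : Set (ℤ × (Fin n → ℤ))) =
      Set.range (fun x : {x // x ∈ T} => (x : ℤ × (Fin n → ℤ))) := by
    ext u; simp
  have hpairmem : pair ∈ Submodule.span ℤ
      (Set.range (fun x : {x // x ∈ T} => (x : ℤ × (Fin n → ℤ)))) := by
    rw [← hTrange, hTspan]; trivial
  obtain ⟨mT, hmT⟩ := (Submodule.mem_span_range_iff_exists_fun ℤ).mp hpairmem
  set m : ι → ℤ := Sum.elim (fun _ => 0) mT with hm
  set q : ι → ℝ := Sum.elim (fun p => t * w p.1 / ((γv p).1 : ℝ)) (fun _ => 0) with hq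
  have hγvpos : ∀ p : {x // x ∈ P}, (0:ℝ) < ((γv p).1 : ℝ) := by
    intro p
    have := hγv1 p
    exact_mod_cast Nat.lt_of_lt_of_le Nat.zero_lt_one this
  have hqnn : ∀ i, 0 ≤ q i := by
    rintro (p | x)
    · apply div_nonneg
      · exact mul_nonneg htpos.le (hw0 _ p.2)
      · exact (hγvpos p).le
    · exact le_refl 0
  -- the two defining equations
  set vint : Fin (n + 1) → ℤ := Fin.cons ((l : ℤ) - D * hh) (fun j => a j - D * ww j) with hvint
  have hm_eq : ∀ pp, ∑ i, m i * vb i pp = vint pp := by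
    intro pp
    rw [Fintype.sum_sum_type]
    have hz1 : ∑ p : {x // x ∈ P}, m (Sum.inl p) * vb (Sum.inl p) pp = 0 := by
      refine Finset.sum_eq_zero fun p _ => ?_
      simp [hm]
    rw [hz1, zero_add]
    have hfst : ∀ x : {x // x ∈ T}, ((γt x).1 : ℤ) = (x : ℤ × (Fin n → ℤ)).1 :=
      fun x => congrArg Prod.fst (hγteq x)
    have hsnd : ∀ x : {x // x ∈ T}, (γt x).2 = (x : ℤ × (Fin n → ℤ)).2 :=
      fun x => congrArg Prod.snd (hγteq x)
    refine Fin.cases ?_ ?_ pp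
    · have h1 := congrArg Prod.fst hmT
      rw [Prod.fst_sum] at h1
      calc ∑ x : {x // x ∈ T}, m (Sum.inr x) * vb (Sum.inr x) 0
          = ∑ x : {x // x ∈ T}, mT x • ((x : ℤ × (Fin n → ℤ))).1 := by
            refine Finset.sum_congr rfl fun x _ => ?_
            rw [hvb0, hm]
            simp only [Sum.elim_inr, hbγ]
            rw [hfst x, smul_eq_mul]
        _ = pair.1 := by
            rw [← h1]
            exact Finset.sum_congr rfl fun x _ => rfl
        _ = vint 0 := by rw [hpair, hvint]; simp
    · intro j
      have h1 := congrArg (fun u => u.2 j) hmT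
      rw [Prod.snd_sum, Finset.sum_apply] at h1
      calc ∑ x : {x // x ∈ T}, m (Sum.inr x) * vb (Sum.inr x) (Fin.succ j)
          = ∑ x : {x // x ∈ T}, (mT x • (x : ℤ × (Fin n → ℤ))).2 j := by
            refine Finset.sum_congr rfl fun x _ => ?_
            rw [hvbs, hm]
            simp only [Sum.elim_inr, hbγ]
            rw [congrFun (hsnd x) j]
            rfl
        _ = a j - ↑D * ww j := h1
        _ = vint (Fin.succ j) := by rw [hvint]; simp
  have hq_eq : ∀ pp, ∑ i, q i * (vb i pp : ℝ) = (vint pp : ℝ) := by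
    intro pp
    rw [Fintype.sum_sum_type]
    have hz2 : ∑ x : {x // x ∈ T}, q (Sum.inr x) * (vb (Sum.inr x) pp : ℝ) = 0 := by
      refine Finset.sum_eq_zero fun x _ => ?_
      simp [hq]
    rw [hz2, add_zero]
    refine Fin.cases ?_ ?_ pp
    · calc ∑ p : {x // x ∈ P}, q (Sum.inl p) * (vb (Sum.inl p) 0 : ℝ)
          = ∑ p : {x // x ∈ P}, t * w p.1 := by
            refine Finset.sum_congr rfl fun p _ => ?_
            rw [hvb0, hq]
            simp only [Sum.elim_inl, hbγ]
            push_cast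
            rw [div_mul_cancel₀ _ (hγvpos p).ne']
        _ = t * ∑ p : {x // x ∈ P}, w p.1 := by rw [Finset.mul_sum]
        _ = t * ∑ p ∈ P, w p := by rw [Finset.sum_coe_sort P (fun p => w p)]
        _ = t := by rw [hw1, mul_one]
        _ = (vint 0 : ℝ) := by rw [hvint, ht]; push_cast; simp
    · intro j
      have hPj : ∀ p : {x // x ∈ P}, ((γv p).2 j : ℝ) = (p : Fin n → ℝ) j * ((γv p).1 : ℝ) := by
        intro p
        have := congrFun (hγveq p) j
        rw [this]
        rw [div_mul_cancel₀ _ (hγvpos p).ne']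
      calc ∑ p : {x // x ∈ P}, q (Sum.inl p) * (vb (Sum.inl p) (Fin.succ j) : ℝ)
          = ∑ p : {x // x ∈ P}, t * (w p.1 * (p : Fin n → ℝ) j) := by
            refine Finset.sum_congr rfl fun p _ => ?_
            rw [hvbs, hq]
            simp only [Sum.elim_inl, hbγ]
            rw [hPj p]
            have := (hγvpos p).ne'
            field_simp
        _ = t * ∑ p : {x // x ∈ P}, w p.1 * (p : Fin n → ℝ) j := by rw [Finset.mul_sum]
        _ = t * ∑ p ∈ P, w p * p j := by
            rw [Finset.sum_coe_sort P (fun p => w p * p j)]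
        _ = t * z j := by
            have := congrFun hwz j
            rw [Finset.sum_apply] at this
            rw [← this]
            rfl
        _ = (vint (Fin.succ j) : ℝ) := by
            have h1 : vint (Fin.succ j) = a j - D * ww j := by rw [hvint]; simp
            rw [h1]
            show t * (((a j : ℝ) - D * ww j) / t) = _
            rw [mul_comm, div_mul_cancel₀ _ htpos.ne']
            push_cast
            ring
  -- apply the combinatorial bound
  obtain ⟨c, hc⟩ := hD m q hqnn (by
    intro pp
    rw [hq_eq pp]
    have h1 : ∑ i, (m i : ℝ) * (vb i pp : ℝ) = ((∑ i, m i * vb i pp : ℤ) : ℝ) := by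
      push_cast
      rfl
    rw [h1, hm_eq pp])
  have hfinal : ∀ pp, ∑ i, (c i : ℤ) * vb i pp = (Fin.cons (l : ℤ) (fun j => (a j : ℤ)) : Fin (n+1) → ℤ) pp := by
    intro pp
    rw [hc pp, hm_eq pp]
    refine Fin.cases ?_ ?_ pp
    · rw [hsum0, hvint]
      simp
    · intro j
      rw [hsums j, hvint]
      simp
  -- conclude membership
  have hcnz : ∃ i, c i ≠ 0 := by
    by_contra hno
    push_neg at hno
    have h0 := hfinal 0
    rw [Fin.cons_zero] at h0
    have : (0 : ℤ) = (l : ℤ) := by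
      rw [← h0]
      refine (Finset.sum_eq_zero fun i _ => ?_).symm
      rw [hno i]
      simp
    omega
  have hmemΓ := sum_nsmul_mem_semigroup Γ hadd bγ hbΓ c hcnz
  have hla : (l, a) = ∑ i, c i • bγ i := by
    have hfst : (∑ i, c i • bγ i).1 = ∑ i, c i * (bγ i).1 := by
      rw [Prod.fst_sum]
      exact Finset.sum_congr rfl fun i _ => rfl
    have hsnd : (∑ i, c i • bγ i).2 = fun j => ∑ i, (c i : ℤ) * (bγ i).2 j := by
      rw [Prod.snd_sum]
      funext j
      rw [Finset.sum_apply]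
      refine Finset.sum_congr rfl fun i _ => ?_
      simp [nsmul_eq_mul]
    refine Prod.ext ?_ ?_
    · rw [hfst]
      have h0 := hfinal 0
      rw [Fin.cons_zero] at h0
      have : ((∑ i, c i * (bγ i).1 : ℕ) : ℤ) = (l : ℤ) := by
        rw [← h0]
        push_cast
        exact Finset.sum_congr rfl fun i _ => by rw [hvb0]
      exact_mod_cast this.symm
    · rw [hsnd]
      funext j
      have hj := hfinal (Fin.succ j)
      rw [Fin.cons_succ] at hj
      show a j = ∑ i, (c i : ℤ) * (bγ i).2 j
      rw [← hj]
      exact (Finset.sum_congr rfl fun i _ => by rw [hvbs]).symm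
  rw [hla]
  exact hmemΓ
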